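/- Let α, β ∈ ℂ* and suppose the kernel of (i,j) ↦ αⁱβʲ from ℤ² to ℂ* is generated by (k,0) for some k ∈ ℤ. If ψ = (ψ₁, ψ₂) is a birational map of ℂ² commuting with (x,y) ↦ (αx, βy), then there exist R₁, R₂ ∈ ℂ(x) with ψ₁(x,y) = x·R₁(x^k) and ψ₂(x,y) = y·R₂(x^k). -/

import Mathlib

open MvPolynomial


noncomputable section Aux8

abbrev R2 := MvPolynomial (Fin 2) ℂ

def sig (α β : ℂ) : R2 →ₐ[ℂ] R2 := aeval ![C α * X 0, C β * X 1]

lemma sig_monomial (α β : ℂ) (u : Fin 2 →₀ ℕ) (c : ℂ) :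
    sig α β (monomial u c) = monomial u (α ^ u 0 * β ^ u 1 * c) := by
  rw [sig, aeval_monomial, Finsupp.prod_pow, Fin.prod_univ_two, monomial_eq,
    Finsupp.prod_pow, Fin.prod_univ_two]
  simp only [Matrix.cons_val_zero, Matrix.cons_val_one, Matrix.head_cons,
    algebraMap_eq, mul_pow, ← C_pow, C_mul]
  ring

lemma sig_coeff (α β : ℂ) (f : R2) (d : Fin 2 →₀ ℕ) :
    coeff d (sig α β f) = α ^ d 0 * β ^ d 1 * coeff d f := by
  induction f using MvPolynomial.induction_on' with
  | monomial u c =>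
      rw [sig_monomial, coeff_monomial, coeff_monomial]
      split <;> simp_all
  | add p q hp hq => simp [map_add, hp, hq, mul_add]

lemma sig_support (α β : ℂ) (hα : α ≠ 0) (hβ : β ≠ 0) (f : R2) :
    (sig α β f).support = f.support := by
  ext d
  simp only [mem_support_iff, sig_coeff]
  constructor
  · intro h h'; simp [h'] at h
  · intro h
    exact mul_ne_zero (mul_ne_zero (pow_ne_zero _ hα) (pow_ne_zero _ hβ)) h

lemma sig_ne_zero (α β : ℂ) (hα : α ≠ 0) (hβ : β ≠ 0) {f : R2} (hf : f ≠ 0) :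
    sig α β f ≠ 0 := by
  intro h
  apply hf
  rw [← support_eq_empty, ← sig_support α β hα hβ, h, support_zero]

lemma eval_sig (α β x y : ℂ) (f : R2) :
    eval ![x, y] (sig α β f) = eval ![α * x, β * y] f := by
  induction f using MvPolynomial.induction_on' with
  | monomial u c =>
      rw [sig_monomial, eval_monomial, eval_monomial, Finsupp.prod_pow, Fin.prod_univ_two,
        Finsupp.prod_pow, Fin.prod_univ_two]
      simp only [Matrix.cons_val_zero, Matrix.cons_val_one, Matrix.head_cons, mul_pow]
      ring
  | add p q hp hq => simp [map_add, hp, hq]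

lemma vec_eta (v : Fin 2 → ℂ) : v = ![v 0, v 1] := by
  funext i; fin_cases i <;> simp

lemma zer (D H : R2) (hH : H ≠ 0)
    (h : ∀ x y : ℂ, eval ![x, y] H ≠ 0 → eval ![x, y] D = 0) : D = 0 := by
  have key : ∀ v : Fin 2 → ℂ, eval v (D * H) = eval v 0 := by
    intro v
    simp only [map_zero, map_mul]
    by_cases hz : eval v H = 0
    · rw [hz, mul_zero]
    · have := h (v 0) (v 1) (by rwa [← vec_eta])
      rw [vec_eta v, this, zero_mul]
  have := MvPolynomial.funext key
  rcases mul_eq_zero.mp this with h' | h'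
  · exact h'
  · exact absurd h' hH

lemma expt (F : R2) (hF : F ≠ 0) :
    ∃ x y : ℂ, x ≠ 0 ∧ y ≠ 0 ∧ eval ![x, y] F ≠ 0 := by
  by_contra hc
  push_neg at hc
  apply hF
  apply zer F (X 0 * X 1) (by simp [X_ne_zero])
  intro x y hxy
  simp only [map_mul, eval_X, Matrix.cons_val_zero, Matrix.cons_val_one, Matrix.head_cons] at hxy
  exact hc x y (left_ne_zero_of_mul hxy) (right_ne_zero_of_mul hxy)

lemma deg0_mul (f g : R2) (hf : f ≠ 0) (hg : g ≠ 0) :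
    degreeOf 0 (f * g) = degreeOf 0 f + degreeOf 0 g := by
  have hf' : finSuccEquiv ℂ 1 f ≠ 0 := by
    intro h; apply hf
    have := congrArg (finSuccEquiv ℂ 1).symm h
    simpa using this
  have hg' : finSuccEquiv ℂ 1 g ≠ 0 := by
    intro h; apply hg
    have := congrArg (finSuccEquiv ℂ 1).symm h
    simpa using this
  rw [← natDegree_finSuccEquiv, ← natDegree_finSuccEquiv, ← natDegree_finSuccEquiv,
    map_mul, Polynomial.natDegree_mul hf' hg']

lemma deg1_mul (f g : R2) (hf : f ≠ 0) (hg : g ≠ 0) :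
    degreeOf 1 (f * g) = degreeOf 1 f + degreeOf 1 g := by
  classical
  set e : Fin 2 ≃ Fin 2 := Equiv.swap 0 1 with he
  have hr : ∀ p : R2, degreeOf 1 p = degreeOf 0 (rename e p) := by
    intro p
    have := MvPolynomial.degreeOf_rename_of_injective (p := p) (f := (e : Fin 2 → Fin 2))
      e.injective 1
    simp only [he, Equiv.swap_apply_right] at this
    exact this.symm
  rw [hr, hr, hr, map_mul]
  have hrf : rename e f ≠ 0 := by
    intro h; exact hf (rename_injective (e : Fin 2 → Fin 2) e.injective (by simpa using h))
  have hrg : rename e g ≠ 0 := by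
    intro h; exact hg (rename_injective (e : Fin 2 → Fin 2) e.injective (by simpa using h))
  exact deg0_mul _ _ hrf hrg

lemma eq_C_of_deg (t : R2) (h0 : degreeOf 0 t = 0) (h1 : degreeOf 1 t = 0) :
    t = C (coeff 0 t) := by
  ext d
  rw [coeff_C]
  by_cases hd : d = 0
  · subst hd; simp
  · rw [if_neg (fun h => hd h.symm)]
    by_contra hne
    have hds : d ∈ t.support := mem_support_iff.mpr hne
    have hd0 : d 0 = 0 := by
      have h' : d 0 ≤ degreeOf 0 t := by
        rw [MvPolynomial.degreeOf_eq_sup]; exact Finset.le_sup (f := fun m => m 0) hds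
      omega
    have hd1 : d 1 = 0 := by
      have h' : d 1 ≤ degreeOf 1 t := by
        rw [MvPolynomial.degreeOf_eq_sup]; exact Finset.le_sup (f := fun m => m 1) hds
      omega
    apply hd
    ext i
    fin_cases i
    · exact hd0
    · exact hd1

lemma laur {ι : Type*} (k : ℤ) (s : Finset ι) (c : ι → ℂ) (m : ι → ℤ)
    (hm : ∀ i ∈ s, k ∣ m i) :
    ∃ (r : Polynomial ℂ) (M : ℕ), ∀ x : ℂ, x ≠ 0 →
      Polynomial.eval (x ^ k) r = (∑ i ∈ s, c i * x ^ m i) * (x ^ k) ^ M := by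
  classical
  set q : ι → ℤ := fun i => m i / k with hq
  set M : ℕ := ∑ i ∈ s, (q i).natAbs with hM
  refine ⟨∑ i ∈ s, Polynomial.C (c i) * Polynomial.X ^ (q i + M).toNat, M, ?_⟩
  intro x hx
  have hu : (x : ℂ) ^ k ≠ 0 := zpow_ne_zero _ hx
  rw [Polynomial.eval_finset_sum, Finset.sum_mul]
  refine Finset.sum_congr rfl fun i hi => ?_
  have hqM : 0 ≤ q i + (M : ℤ) := by
    have : (q i).natAbs ≤ M := Finset.single_le_sum (f := fun i => (q i).natAbs)
      (fun _ _ => Nat.zero_le _) hi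
    omega
  have hkq : k * q i = m i := Int.mul_ediv_cancel' (hm i hi)
  have hxm : (x ^ k) ^ q i = x ^ m i := by
    rw [← zpow_mul, hkq]
  calc Polynomial.eval (x ^ k) (Polynomial.C (c i) * Polynomial.X ^ (q i + M).toNat)
      = c i * (x ^ k) ^ (q i + M).toNat := by
        simp
    _ = c i * (x ^ k) ^ (((q i + M).toNat : ℕ) : ℤ) := by
        rw [zpow_natCast]
    _ = c i * ((x ^ k) ^ q i * (x ^ k) ^ (M : ℤ)) := by
        rw [Int.toNat_of_nonneg hqM, zpow_add₀ hu]
    _ = c i * x ^ m i * (x ^ k) ^ M := by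
        rw [hxm, zpow_natCast]; ring

lemma eval_str (B : R2) (b1 : ℕ) (hb1 : ∀ d ∈ B.support, d 1 = b1) (q : ℤ) (x y : ℂ)
    (hx : x ≠ 0) :
    eval ![x, y] B = y ^ b1 * x ^ q * ∑ d ∈ B.support, coeff d B * x ^ ((d 0 : ℤ) - q) := by
  rw [eval_eq', Finset.mul_sum]
  refine Finset.sum_congr rfl fun d hd => ?_
  rw [Fin.prod_univ_two]
  simp only [Matrix.cons_val_zero, Matrix.cons_val_one, Matrix.head_cons]
  rw [hb1 d hd]
  have : (x : ℂ) ^ (d 0) = x ^ q * x ^ ((d 0 : ℤ) - q) := by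
    rw [← zpow_add₀ hx, ← zpow_natCast x (d 0)]
    congr 1
    ring
  rw [this]
  ring

lemma ker_step (α β : ℂ) (hα : α ≠ 0) (hβ : β ≠ 0) (k : ℤ)
    (hker : ∀ i j : ℤ, α ^ i * β ^ j = 1 ↔ ∃ t : ℤ, i = t * k ∧ j = 0)
    (p q r s : ℕ) (h : α ^ p * β ^ q = α ^ r * β ^ s) :
    (∃ t : ℤ, (p : ℤ) - r = t * k) ∧ q = s := by
  have h1 : α ^ ((p : ℤ) - r) * β ^ ((q : ℤ) - s) = 1 := by
    rw [zpow_sub₀ hα, zpow_sub₀ hβ, div_mul_div_comm, div_eq_one_iff_eq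
      (mul_ne_zero (zpow_ne_zero _ hα) (zpow_ne_zero _ hβ))]
    simpa [zpow_natCast] using h
  obtain ⟨t, ht1, ht2⟩ := (hker _ _).mp h1
  exact ⟨⟨t, ht1⟩, by omega⟩

lemma main (α β : ℂ) (hα : α ≠ 0) (hβ : β ≠ 0) (k : ℤ)
    (hker : ∀ i j : ℤ, α ^ i * β ^ j = 1 ↔ ∃ t : ℤ, i = t * k ∧ j = 0)
    (e₁ e₂ : ℕ) (P Q : R2) (hQ : Q ≠ 0)
    (E : sig α β P * Q = C (α ^ e₁ * β ^ e₂) * (P * sig α β Q)) :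
    ∃ rn rd : Polynomial ℂ, rd ≠ 0 ∧ ∀ x y : ℂ, x ≠ 0 → y ≠ 0 → eval ![x, y] Q ≠ 0 →
      eval ![x, y] P / eval ![x, y] Q =
        x ^ e₁ * y ^ e₂ * (Polynomial.eval (x ^ k) rn / Polynomial.eval (x ^ k) rd) := by
  classical
  by_cases hP : P = 0
  · exact ⟨0, 1, one_ne_zero, fun x y hx hy hQe => by simp [hP]⟩
  set γ : ℂ := α ^ e₁ * β ^ e₂ with hγdef
  have hγ : γ ≠ 0 := mul_ne_zero (pow_ne_zero _ hα) (pow_ne_zero _ hβ)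
  obtain ⟨A, B, g, hAB, hgA, hgB⟩ := UniqueFactorizationMonoid.exists_reduced_factors P hP Q
  have hA : A ≠ 0 := fun h => hP (by rw [← hgA, h, mul_zero])
  have hB : B ≠ 0 := fun h => hQ (by rw [← hgB, h, mul_zero])
  have hg : g ≠ 0 := fun h => hQ (by rw [← hgB, h, zero_mul])
  have hsg : sig α β g ≠ 0 := sig_ne_zero α β hα hβ hg
  have E' : sig α β A * B = C γ * (A * sig α β B) := by
    apply mul_left_cancel₀ (mul_ne_zero hsg hg)
    have E2 := E
    have hm1 : sig α β P = sig α β g * sig α β A := by rw [← hgA, map_mul]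
    have hm2 : sig α β Q = sig α β g * sig α β B := by rw [← hgB, map_mul]
    rw [hm1, hm2, ← hgA, ← hgB] at E2
    linear_combination E2
  have hdvd : A ∣ sig α β A := by
    have h1 : A ∣ sig α β A * B := by
      rw [E']; exact ⟨C γ * sig α β B, by ring⟩
    exact hAB.dvd_of_dvd_mul_right h1
  obtain ⟨t, ht⟩ := hdvd
  have htne : t ≠ 0 := by
    intro h; exact sig_ne_zero α β hα hβ hA (by rw [ht, h, mul_zero])
  have hdeg0 : degreeOf 0 t = 0 := by
    have h1 : degreeOf 0 (sig α β A) = degreeOf 0 A := by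
      rw [degreeOf_eq_sup, degreeOf_eq_sup, sig_support α β hα hβ]
    rw [ht, deg0_mul A t hA htne] at h1; omega
  have hdeg1 : degreeOf 1 t = 0 := by
    have h1 : degreeOf 1 (sig α β A) = degreeOf 1 A := by
      rw [degreeOf_eq_sup, degreeOf_eq_sup, sig_support α β hα hβ]
    rw [ht, deg1_mul A t hA htne] at h1; omega
  have htC : t = C (coeff 0 t) := eq_C_of_deg t hdeg0 hdeg1
  set c := coeff 0 t with hcdef
  have hc : c ≠ 0 := fun h => htne (by rw [htC, h, map_zero])
  have hsA : sig α β A = C c * A := by rw [ht, htC]; ring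
  have hCγ : (C γ : R2) ≠ 0 := by
    intro h; exact hγ (by have := congrArg (coeff 0) h; simpa using this)
  have hsB : sig α β B = C (γ⁻¹ * c) * B := by
    have h2 : A * (C γ * sig α β B) = A * (C c * B) := by
      linear_combination hsA * B - E'
    have h3 := mul_left_cancel₀ hA h2
    apply mul_left_cancel₀ hCγ
    rw [h3, ← mul_assoc, ← C_mul, mul_inv_cancel_left₀ hγ]
  have hAchi : ∀ d ∈ A.support, α ^ d 0 * β ^ d 1 = c := by
    intro d hd
    have h1 := sig_coeff α β A d
    rw [hsA, coeff_C_mul] at h1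
    exact mul_right_cancel₀ (mem_support_iff.mp hd) h1.symm
  have hBchi : ∀ d ∈ B.support, α ^ d 0 * β ^ d 1 = γ⁻¹ * c := by
    intro d hd
    have h1 := sig_coeff α β B d
    rw [hsB, coeff_C_mul] at h1
    exact mul_right_cancel₀ (mem_support_iff.mp hd) h1.symm
  obtain ⟨a, ha⟩ := Finset.nonempty_iff_ne_empty.mpr
    (fun h => hA (support_eq_empty.mp h))
  obtain ⟨b, hb⟩ := Finset.nonempty_iff_ne_empty.mpr
    (fun h => hB (support_eq_empty.mp h))
  have hAk : ∀ d ∈ A.support, k ∣ (d 0 : ℤ) - (a 0 : ℤ) ∧ d 1 = a 1 := by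
    intro d hd
    have h := (hAchi d hd).trans (hAchi a ha).symm
    obtain ⟨⟨t', ht'⟩, hq⟩ := ker_step α β hα hβ k hker _ _ _ _ h
    exact ⟨⟨t', by rw [ht', mul_comm]⟩, hq⟩
  have hBk : ∀ d ∈ B.support, k ∣ (d 0 : ℤ) - (b 0 : ℤ) ∧ d 1 = b 1 := by
    intro d hd
    have h := (hBchi d hd).trans (hBchi b hb).symm
    obtain ⟨⟨t', ht'⟩, hq⟩ := ker_step α β hα hβ k hker _ _ _ _ h
    exact ⟨⟨t', by rw [ht', mul_comm]⟩, hq⟩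
  have hcross : α ^ (a 0) * β ^ (a 1) = α ^ (b 0 + e₁) * β ^ (b 1 + e₂) := by
    have hbb' : α ^ b 0 * β ^ b 1 * γ = c := by
      rw [hBchi b hb]; field_simp
    rw [hAchi a ha, pow_add, pow_add, ← hbb', hγdef]; ring
  obtain ⟨⟨t₀, ht₀⟩, h12⟩ := ker_step α β hα hβ k hker _ _ _ _ hcross
  push_cast at ht₀
  -- ht₀ : (a 0 : ℤ) - (b 0 + e₁) = t₀ * k,  h12 : a 1 = b 1 + e₂
  obtain ⟨rA, MA, hrA⟩ := laur k A.support (fun d => coeff d A)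
    (fun d => (d 0 : ℤ) - ((b 0 : ℤ) + e₁)) (by
      intro d hd
      show k ∣ (d 0 : ℤ) - ((b 0 : ℤ) + e₁)
      have h1 := (hAk d hd).1
      have h2 : (d 0 : ℤ) - ((b 0 : ℤ) + e₁) = ((d 0 : ℤ) - a 0) + t₀ * k := by
        rw [← ht₀]; ring
      rw [h2]
      exact dvd_add h1 (dvd_mul_left k t₀))
  obtain ⟨rB, MB, hrB⟩ := laur k B.support (fun d => coeff d B)
    (fun d => (d 0 : ℤ) - (b 0 : ℤ)) (fun d hd => (hBk d hd).1)
  have hevA : ∀ x y : ℂ, x ≠ 0 → eval ![x, y] A =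
      y ^ (a 1) * x ^ ((b 0 : ℤ) + e₁) *
        ∑ d ∈ A.support, coeff d A * x ^ ((d 0 : ℤ) - ((b 0 : ℤ) + e₁)) :=
    fun x y hx => eval_str A (a 1) (fun d hd => (hAk d hd).2) _ x y hx
  have hevB : ∀ x y : ℂ, x ≠ 0 → eval ![x, y] B =
      y ^ (b 1) * x ^ ((b 0 : ℤ)) *
        ∑ d ∈ B.support, coeff d B * x ^ ((d 0 : ℤ) - (b 0 : ℤ)) :=
    fun x y hx => eval_str B (b 1) (fun d hd => (hBk d hd).2) _ x y hx
  have hrBne : rB ≠ 0 := by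
    obtain ⟨x₀, y₀, hx₀, hy₀, hF⟩ := expt Q hQ
    have hBx : eval ![x₀, y₀] B ≠ 0 := fun h => hF (by rw [← hgB, map_mul, h, mul_zero])
    have hTB : (∑ d ∈ B.support, coeff d B * x₀ ^ ((d 0 : ℤ) - (b 0 : ℤ))) ≠ 0 := by
      intro h; exact hBx (by rw [hevB x₀ y₀ hx₀, h, mul_zero])
    intro h
    have h1 := hrB x₀ hx₀
    rw [h, Polynomial.eval_zero] at h1
    exact (mul_ne_zero hTB (pow_ne_zero _ (zpow_ne_zero _ hx₀))) h1.symm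
  refine ⟨rA * Polynomial.X ^ MB, rB * Polynomial.X ^ MA,
    mul_ne_zero hrBne (pow_ne_zero _ Polynomial.X_ne_zero), ?_⟩
  intro x y hx hy hQe
  have hge : eval ![x, y] g ≠ 0 := fun h => hQe (by rw [← hgB, map_mul, h, zero_mul])
  have hBe : eval ![x, y] B ≠ 0 := fun h => hQe (by rw [← hgB, map_mul, h, mul_zero])
  have hu : (x : ℂ) ^ k ≠ 0 := zpow_ne_zero _ hx
  set TA := ∑ d ∈ A.support, coeff d A * x ^ ((d 0 : ℤ) - ((b 0 : ℤ) + e₁)) with hTAdef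
  set TB := ∑ d ∈ B.support, coeff d B * x ^ ((d 0 : ℤ) - (b 0 : ℤ)) with hTBdef
  have hPQ : eval ![x, y] P / eval ![x, y] Q = eval ![x, y] A / eval ![x, y] B := by
    rw [← hgA, ← hgB, map_mul, map_mul, mul_div_mul_left _ _ hge]
  have step1 : eval ![x, y] A / eval ![x, y] B =
      (x ^ e₁ * y ^ e₂ * TA * (y ^ (b 1) * x ^ ((b 0 : ℤ)))) /
        (TB * (y ^ (b 1) * x ^ ((b 0 : ℤ)))) := by
    rw [hevA x y hx, hevB x y hx, h12]
    congr 1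
    · rw [pow_add, zpow_add₀ hx, ← zpow_natCast x e₁]; ring
    · ring
  have hc1 : y ^ (b 1) * x ^ ((b 0 : ℤ)) ≠ 0 :=
    mul_ne_zero (pow_ne_zero _ hy) (zpow_ne_zero _ hx)
  have step2 : eval ![x, y] A / eval ![x, y] B = x ^ e₁ * y ^ e₂ * (TA / TB) := by
    rw [step1, mul_div_mul_right _ _ hc1, mul_div_assoc]
  have step3 : Polynomial.eval (x ^ k) (rA * Polynomial.X ^ MB) /
      Polynomial.eval (x ^ k) (rB * Polynomial.X ^ MA) =
      (TA * ((x ^ k) ^ MA * (x ^ k) ^ MB)) / (TB * ((x ^ k) ^ MA * (x ^ k) ^ MB)) := by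
    rw [Polynomial.eval_mul, Polynomial.eval_mul, Polynomial.eval_pow, Polynomial.eval_pow,
      Polynomial.eval_X, hrA x hx, hrB x hx]
    congr 1 <;> ring
  rw [hPQ, step2, step3, mul_div_mul_right _ _
    (mul_ne_zero (pow_ne_zero _ hu) (pow_ne_zero _ hu))]

lemma getE (α β γ : ℂ) (hα : α ≠ 0) (hβ : β ≠ 0) (hγ : γ ≠ 0) (h₀ P Q : R2)
    (h₀ne : h₀ ≠ 0) (hQ : Q ≠ 0)
    (hc : ∀ x y : ℂ, eval ![x, y] h₀ ≠ 0 →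
      eval ![α * x, β * y] P / eval ![α * x, β * y] Q =
        γ * (eval ![x, y] P / eval ![x, y] Q)) :
    sig α β P * Q = C γ * (P * sig α β Q) := by
  have hsQ := sig_ne_zero α β hα hβ hQ
  have hz := zer (sig α β P * Q - C γ * (P * sig α β Q)) (h₀ * Q * sig α β Q)
    (mul_ne_zero (mul_ne_zero h₀ne hQ) hsQ) ?_
  · exact sub_eq_zero.mp hz
  intro x y hxy
  simp only [map_mul] at hxy
  have eh₀ : eval ![x, y] h₀ ≠ 0 := fun h => hxy (by rw [h, zero_mul, zero_mul])
  have eQ : eval ![x, y] Q ≠ 0 := fun h => hxy (by rw [h, mul_zero, zero_mul])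
  have esQ : eval ![x, y] (sig α β Q) ≠ 0 := fun h => hxy (by rw [h, mul_zero])
  have h2 := hc x y eh₀
  rw [← eval_sig, ← eval_sig] at h2
  rw [div_eq_iff esQ] at h2
  simp only [map_sub, map_mul, eval_C]
  field_simp at h2
  linear_combination h2

end Aux8

/-- A function `ℂ² → ℂ` given by a rational expression. -/
def IsRatMap (f : ℂ → ℂ → ℂ) : Prop :=
  ∃ p q : MvPolynomial (Fin 2) ℂ, q ≠ 0 ∧
    ∀ x y : ℂ, f x y = MvPolynomial.eval ![x, y] p / MvPolynomial.eval ![x, y] q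

/-- A pair of rational functions defining a birational map of `ℂ²`. -/
def IsBirationalMap (f g : ℂ → ℂ → ℂ) : Prop :=
  IsRatMap f ∧ IsRatMap g ∧
    ∃ f' g' : ℂ → ℂ → ℂ, IsRatMap f' ∧ IsRatMap g' ∧
      ∃ h : MvPolynomial (Fin 2) ℂ, h ≠ 0 ∧
        ∀ x y : ℂ, MvPolynomial.eval ![x, y] h ≠ 0 →
          f' (f x y) (g x y) = x ∧ g' (f x y) (g x y) = y

/-- if the kernel of `(i,j) ↦ αⁱβʲ` is generated by `(k,0)` and the
birational map `ψ = (ψ₁, ψ₂)` of `ℂ²` commutes with `(x,y) ↦ (αx, βy)`, then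
`ψ₁(x,y) = x·R₁(x^k)` and `ψ₂(x,y) = y·R₂(x^k)` for some `R₁, R₂ ∈ ℂ(x)`. -/
theorem stmt8 (α β : ℂ) (hα : α ≠ 0) (hβ : β ≠ 0) (k : ℤ)
    (hker : ∀ i j : ℤ, α ^ i * β ^ j = 1 ↔ ∃ t : ℤ, i = t * k ∧ j = 0)
    (ψ₁ ψ₂ : ℂ → ℂ → ℂ) (hbir : IsBirationalMap ψ₁ ψ₂)
    (hcomm : ∃ h₀ : MvPolynomial (Fin 2) ℂ, h₀ ≠ 0 ∧
      ∀ x y : ℂ, MvPolynomial.eval ![x, y] h₀ ≠ 0 →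
        ψ₁ (α * x) (β * y) = α * ψ₁ x y ∧ ψ₂ (α * x) (β * y) = β * ψ₂ x y) :
    ∃ (r₁n r₁d r₂n r₂d : Polynomial ℂ), r₁d ≠ 0 ∧ r₂d ≠ 0 ∧
      ∃ h : MvPolynomial (Fin 2) ℂ, h ≠ 0 ∧
        ∀ x y : ℂ, MvPolynomial.eval ![x, y] h ≠ 0 →
          ψ₁ x y = x * (Polynomial.eval (x ^ k) r₁n / Polynomial.eval (x ^ k) r₁d) ∧
          ψ₂ x y = y * (Polynomial.eval (x ^ k) r₂n / Polynomial.eval (x ^ k) r₂d) := by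
  obtain ⟨⟨P₁, Q₁, hQ₁, hψ₁⟩, ⟨P₂, Q₂, hQ₂, hψ₂⟩, -⟩ := hbir
  obtain ⟨h₀, h₀ne, hco⟩ := hcomm
  have E₁ : sig α β P₁ * Q₁ = C (α ^ 1 * β ^ 0) * (P₁ * sig α β Q₁) := by
    have := getE α β α hα hβ hα h₀ P₁ Q₁ h₀ne hQ₁ (fun x y hh => by
      rw [← hψ₁, ← hψ₁]; exact (hco x y hh).1)
    rw [pow_one, pow_zero, mul_one]
    exact this
  have E₂ : sig α β P₂ * Q₂ = C (α ^ 0 * β ^ 1) * (P₂ * sig α β Q₂) := by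
    have := getE α β β hα hβ hβ h₀ P₂ Q₂ h₀ne hQ₂ (fun x y hh => by
      rw [← hψ₂, ← hψ₂]; exact (hco x y hh).2)
    rw [pow_one, pow_zero, one_mul]
    exact this
  obtain ⟨rn1, rd1, hrd1, hmain1⟩ := main α β hα hβ k hker 1 0 P₁ Q₁ hQ₁ E₁
  obtain ⟨rn2, rd2, hrd2, hmain2⟩ := main α β hα hβ k hker 0 1 P₂ Q₂ hQ₂ E₂
  refine ⟨rn1, rd1, rn2, rd2, hrd1, hrd2, X 0 * X 1 * Q₁ * Q₂,
    mul_ne_zero (mul_ne_zero (mul_ne_zero (X_ne_zero 0) (X_ne_zero 1)) hQ₁) hQ₂, ?_⟩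
  intro x y hh
  simp only [map_mul, eval_X, Matrix.cons_val_zero, Matrix.cons_val_one, Matrix.head_cons] at hh
  have hx : x ≠ 0 := fun h => hh (by rw [h]; ring)
  have hy : y ≠ 0 := fun h => hh (by rw [h]; ring)
  have h1 : eval ![x, y] Q₁ ≠ 0 := fun h => hh (by rw [h]; ring)
  have h2 : eval ![x, y] Q₂ ≠ 0 := fun h => hh (by rw [h]; ring)
  constructor
  · rw [hψ₁ x y]
    have := hmain1 x y hx hy h1
    simpa using this
  · rw [hψ₂ x y]
    have := hmain2 x y hx hy h2
    simpa using this
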